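/- arXiv:1707.06956 — 2 statements merged into one kernel-verified Lean document; each statement's English description precedes it below -/
import Mathlib

section
/- Let f be a probability density that is continuously differentiable and strictly positive on (0,∞) and such that Lin's function L_f(x) = -x f'(x)/f(x) is (strictly) monotone increasing on (0,∞). Then, for every pair of constants 0 < a < b, the function τ(x) := f(ax)/f(bx) is (strictly) monotone increasing in x on (0,∞). -/
/-!
Writing `τ(x) = f(ax)/f(bx)`, the logarithmic derivative is
`τ'(x)/τ(x) = (L_f(bx) - L_f(ax)) / x`, which is positive for `x > 0` because `ax < bx`
and `L_f` is strictly increasing.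
-/

open MeasureTheory Filter Set

/-- Lin's function of a density `f`: `L_f(x) = -x f'(x) / f(x)`. -/
noncomputable def linFun (f : ℝ → ℝ) : ℝ → ℝ := fun x => -x * deriv f x / f x

section LinFun

variable {f : ℝ → ℝ} {a b c x : ℝ}

lemma hasDerivAt_comp_const_mul_of_linFun (hx : x ≠ 0) (hf : DifferentiableAt ℝ f (c * x))
    (hfc : f (c * x) ≠ 0) :
    HasDerivAt (fun y => f (c * y)) (-linFun f (c * x) * f (c * x) / x) x := by
  have hchain : HasDerivAt (fun y => f (c * y)) (deriv f (c * x) * c) x := by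
    simpa [Function.comp_def] using hf.hasDerivAt.comp x ((hasDerivAt_id x).const_mul c)
  refine hchain.congr_deriv ?_
  simp only [linFun]
  field_simp

lemma hasDerivAt_div_comp_const_mul (hx : x ≠ 0)
    (hfa : DifferentiableAt ℝ f (a * x)) (hfb : DifferentiableAt ℝ f (b * x))
    (ha0 : f (a * x) ≠ 0) (hb0 : f (b * x) ≠ 0) :
    HasDerivAt (fun y => f (a * y) / f (b * y))
      (f (a * x) / f (b * x) * (linFun f (b * x) - linFun f (a * x)) / x) x := by
  refine ((hasDerivAt_comp_const_mul_of_linFun hx hfa ha0).div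
    (hasDerivAt_comp_const_mul_of_linFun hx hfb hb0) hb0).congr_deriv ?_
  field_simp
  ring

end LinFun

theorem ratio_strictMono_of_linFun_strictMono_general
    (f : ℝ → ℝ)
    (hC : ContDiffOn ℝ 1 f (Ioi 0))
    (hpos : ∀ x ∈ Ioi (0:ℝ), 0 < f x)
    (hL : StrictMonoOn (linFun f) (Ioi 0))
    (a b : ℝ) (ha : 0 < a) (hab : a < b) :
    StrictMonoOn (fun x => f (a * x) / f (b * x)) (Ioi 0) := by
  have hb : 0 < b := ha.trans hab
  have hdiff : ∀ y ∈ Ioi (0:ℝ), DifferentiableAt ℝ f y := fun y hy =>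
    (hC.differentiableOn one_ne_zero).differentiableAt (Ioi_mem_nhds hy)
  have hderiv : ∀ x ∈ Ioi (0:ℝ), HasDerivAt (fun y => f (a * y) / f (b * y))
      (f (a * x) / f (b * x) * (linFun f (b * x) - linFun f (a * x)) / x) x := fun x hx =>
    hasDerivAt_div_comp_const_mul hx.ne' (hdiff _ (mul_pos ha hx))
      (hdiff _ (mul_pos hb hx)) (hpos _ (mul_pos ha hx)).ne' (hpos _ (mul_pos hb hx)).ne'
  refine strictMonoOn_of_hasDerivWithinAt_pos (convex_Ioi 0)
    (fun x hx => (hderiv x hx).continuousAt.continuousWithinAt)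
    (fun x hx => (hderiv x (interior_subset hx)).hasDerivWithinAt) fun x hx => ?_
  have hx : 0 < x := interior_subset hx
  have hLab : linFun f (a * x) < linFun f (b * x) :=
    hL (mul_pos ha hx) (mul_pos hb hx) (mul_lt_mul_of_pos_right hab hx)
  have hratio : 0 < f (a * x) / f (b * x) :=
    div_pos (hpos _ (mul_pos ha hx)) (hpos _ (mul_pos hb hx))
  exact div_pos (mul_pos hratio (sub_pos.2 hLab)) hx

/-- If `f` is a probability density of a positive random variable, continuously
differentiable and strictly positive on `(0,∞)`, whose Lin function is strictly monotone
increasing on `(0,∞)`, then for all `0 < a < b` the function `τ(x) = f(ax)/f(bx)` is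
strictly monotone increasing on `(0,∞)`. -/
theorem ratio_strictMono_of_linFun_strictMono
    (f : ℝ → ℝ)
    (hf0 : ∀ x, 0 ≤ f x) (hvanish : ∀ x ≤ (0:ℝ), f x = 0)
    (hint : ∫ x in Ioi (0:ℝ), f x = 1)
    (hC : ContDiffOn ℝ 1 f (Ioi 0))
    (hpos : ∀ x ∈ Ioi (0:ℝ), 0 < f x)
    (hL : StrictMonoOn (linFun f) (Ioi 0))
    (a b : ℝ) (ha : 0 < a) (hab : a < b) :
    StrictMonoOn (fun x => f (a * x) / f (b * x)) (Ioi 0) :=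
  ratio_strictMono_of_linFun_strictMono_general f hC hpos hL a b ha hab
end

section
/- Let f₁ and f₂ be probability densities strictly positive on (0,∞), let 0 < a < v, let K = [v−a, v+a] × [v−a, v+a], let 0 < r < a/4, and let β satisfy 0 < β < min{ f₁(x) f₂(y) : (x,y) ∈ K }. Let φ be any measurable function on ℝ² with 0 ≤ φ(x,y) ≤ β for all (x,y) and φ(x,y) = 0 whenever (x − (v + a/2))² + (y − (v + a/2))² > r². Then the function f(x,y) := f₁(x) f₂(y) − φ(x,y) + φ(x, y+a) − φ(x+a, y+a) + φ(x+a, y) is nonnegative on ℝ², vanishes outside the first quadrant, integrates to 1 over ℝ², and its marginals are f₁ and f₂: ∫₀^∞ f(x,y) dy = f₁(x) for all x > 0 and ∫₀^∞ f(x,y) dx = f₂(y) for all y > 0. -/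
/-!
The perturbation `φ(x,y) − φ(x,y+a) + φ(x+a,y+a) − φ(x+a,y)` is a second difference of `φ`
along the translations `(a,0)` and `(0,a)`. Integrated over either variable, or over the plane,
it becomes the integral of `g − g(· + b)` for an integrable `g`, which vanishes by translation
invariance of Lebesgue measure; so the marginals and the total mass of `f₁ ⊗ f₂` survive.

The support of `φ` lies in a square of side `2r < a` inside `K`, so of the two terms with a minus
sign, `φ(x,y)` and `φ(x+a,y+a)`, at most one is nonzero, and only when `(x,y) ∈ K`, where it is
dominated by `β < f₁(x) f₂(y)`. Since the square lies more than `a` away from the axes, every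
translate of `φ` occurring in the perturbation vanishes off the first quadrant, as does
`f₁(x) f₂(y)`.
-/

open MeasureTheory Set Function

lemma integral_sub_comp_add_right_eq_zero {G : Type*} [MeasurableSpace G] [AddGroup G]
    [MeasurableAdd G] {μ : Measure G} [μ.IsAddRightInvariant] {g : G → ℝ}
    (hg : Integrable g μ) (b : G) : ∫ x, (g x - g (x + b)) ∂μ = 0 := by
  rw [integral_sub hg (hg.comp_add_right b), integral_add_right_eq_self, sub_self]

lemma integrable_of_norm_le_of_support_subset {α E : Type*} [MeasurableSpace α]
    [NormedAddCommGroup E] {μ : Measure α} {g : α → E} (hg : AEStronglyMeasurable g μ)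
    {M : ℝ} (hM : ∀ x, ‖g x‖ ≤ M) {s : Set α} (hs : μ s ≠ ⊤) (hsupp : support g ⊆ s) :
    Integrable g μ :=
  (integrableOn_iff_integrable_of_support_subset hsupp).1 <|
    Measure.integrableOn_of_bounded hs hg (ae_of_all _ hM)

lemma integral_eq_setIntegral_Ioi_of_nonpos {f : ℝ → ℝ} (hf : ∀ x ≤ 0, f x = 0) :
    ∫ x, f x = ∫ x in Ioi 0, f x :=
  (setIntegral_eq_integral_of_forall_compl_eq_zero fun x hx ↦ hf x (not_lt.1 hx)).symm

lemma support_subset_Icc_prod_Icc_of_sq_add_sq {φ : ℝ × ℝ → ℝ} {c r : ℝ} (hr : 0 ≤ r)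
    (hφ : ∀ p : ℝ × ℝ, r ^ 2 < (p.1 - c) ^ 2 + (p.2 - c) ^ 2 → φ p = 0) :
    support φ ⊆ Icc (c - r) (c + r) ×ˢ Icc (c - r) (c + r) := by
  intro p hp
  have hdisc : (p.1 - c) ^ 2 + (p.2 - c) ^ 2 ≤ r ^ 2 := not_lt.1 (mt (hφ p) hp)
  obtain ⟨h₁, h₁'⟩ := abs_le_of_sq_le_sq' (by nlinarith [sq_nonneg (p.2 - c)]) hr
  obtain ⟨h₂, h₂'⟩ := abs_le_of_sq_le_sq' (by nlinarith [sq_nonneg (p.1 - c)]) hr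
  exact ⟨⟨by linarith, by linarith⟩, ⟨by linarith, by linarith⟩⟩

section BoundedOnSquare

variable {φ : ℝ × ℝ → ℝ} {c r M : ℝ}
  (hsupp : support φ ⊆ Icc (c - r) (c + r) ×ˢ Icc (c - r) (c + r))
  (hφm : Measurable φ) (hM : ∀ p, ‖φ p‖ ≤ M)
include hsupp hφm hM

lemma integrable_of_support_subset_Icc_prod_Icc : Integrable φ :=
  integrable_of_norm_le_of_support_subset hφm.aestronglyMeasurable hM
    (isCompact_Icc.prod isCompact_Icc).measure_lt_top.ne hsupp

lemma integrable_prodMk_left_of_support_subset_Icc_prod_Icc (x : ℝ) :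
    Integrable fun y ↦ φ (x, y) :=
  integrable_of_norm_le_of_support_subset (hφm.comp measurable_prodMk_left).aestronglyMeasurable
    (fun _ ↦ hM _) measure_Icc_lt_top.ne fun _ h ↦ (hsupp h).2

lemma integrable_prodMk_right_of_support_subset_Icc_prod_Icc (y : ℝ) :
    Integrable fun x ↦ φ (x, y) :=
  integrable_of_norm_le_of_support_subset (hφm.comp measurable_prodMk_right).aestronglyMeasurable
    (fun _ ↦ hM _) measure_Icc_lt_top.ne fun _ h ↦ (hsupp h).1

end BoundedOnSquare

def perturbedDensity (f₁ f₂ : ℝ → ℝ) (φ : ℝ × ℝ → ℝ) (a : ℝ) (p : ℝ × ℝ) : ℝ :=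
  f₁ p.1 * f₂ p.2 - φ p + φ (p.1, p.2 + a) - φ (p.1 + a, p.2 + a) + φ (p.1 + a, p.2)

namespace perturbedDensity

variable {f₁ f₂ : ℝ → ℝ} {φ : ℝ × ℝ → ℝ} {a : ℝ}

lemma integral_prodMk_left (x : ℝ) (hf₂ : Integrable f₂) (hφx : Integrable fun y ↦ φ (x, y))
    (hφxa : Integrable fun y ↦ φ (x + a, y)) :
    ∫ y, perturbedDensity f₁ f₂ φ a (x, y) = f₁ x * ∫ y, f₂ y := by
  set g : ℝ → ℝ := fun y ↦ φ (x, y) - φ (x + a, y)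
  have hg : Integrable g := hφx.sub hφxa
  have hdiff : Integrable fun y ↦ g y - g (y + a) := hg.sub (hg.comp_add_right a)
  have hrepr : (fun y ↦ perturbedDensity f₁ f₂ φ a (x, y)) =
      fun y ↦ f₁ x * f₂ y - (g y - g (y + a)) := by
    funext y; simp only [perturbedDensity, g]; ring
  rw [hrepr, integral_sub (hf₂.const_mul _) hdiff, integral_sub_comp_add_right_eq_zero hg,
    integral_const_mul, sub_zero]

lemma integral_prodMk_right (y : ℝ) (hf₁ : Integrable f₁) (hφy : Integrable fun x ↦ φ (x, y))
    (hφya : Integrable fun x ↦ φ (x, y + a)) :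
    ∫ x, perturbedDensity f₁ f₂ φ a (x, y) = (∫ x, f₁ x) * f₂ y := by
  set g : ℝ → ℝ := fun x ↦ φ (x, y) - φ (x, y + a)
  have hg : Integrable g := hφy.sub hφya
  have hdiff : Integrable fun x ↦ g x - g (x + a) := hg.sub (hg.comp_add_right a)
  have hrepr : (fun x ↦ perturbedDensity f₁ f₂ φ a (x, y)) =
      fun x ↦ f₁ x * f₂ y - (g x - g (x + a)) := by
    funext x; simp only [perturbedDensity, g]; ring
  rw [hrepr, integral_sub (hf₁.mul_const _) hdiff, integral_sub_comp_add_right_eq_zero hg,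
    integral_mul_const, sub_zero]

lemma integral_eq_integral_mul_integral (hf₁ : Integrable f₁) (hf₂ : Integrable f₂)
    (hφ : Integrable φ) :
    ∫ p, perturbedDensity f₁ f₂ φ a p = (∫ x, f₁ x) * ∫ y, f₂ y := by
  set g : ℝ × ℝ → ℝ := fun q ↦ φ q - φ (q + (0, a))
  have hg : Integrable g := hφ.sub (hφ.comp_add_right _)
  have hdiff : Integrable fun p ↦ g p - g (p + (a, 0)) := hg.sub (hg.comp_add_right _)
  have hprod : Integrable fun p : ℝ × ℝ ↦ f₁ p.1 * f₂ p.2 := by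
    rw [Measure.volume_eq_prod]; exact hf₁.mul_prod hf₂
  have hrepr : perturbedDensity f₁ f₂ φ a = fun p ↦ f₁ p.1 * f₂ p.2 - (g p - g (p + (a, 0))) := by
    funext ⟨x, y⟩; simp only [perturbedDensity, g, Prod.mk_add_mk, add_zero]; ring
  rw [hrepr, integral_sub hprod hdiff, integral_sub_comp_add_right_eq_zero hg, sub_zero,
    Measure.volume_eq_prod, integral_prod_mul]

section Support

variable {c r : ℝ} (hsupp : support φ ⊆ Icc (c - r) (c + r) ×ˢ Icc (c - r) (c + r))
include hsupp

lemma nonneg (hf₁ : ∀ x, 0 ≤ f₁ x) (hf₂ : ∀ y, 0 ≤ f₂ y) (h2r : 2 * r < a) {β : ℝ}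
    (hφ0 : ∀ p, 0 ≤ φ p) (hφβ : ∀ p, φ p ≤ β)
    (hβ : ∀ x ∈ Icc (c - r - a) (c + r), ∀ y ∈ Icc (c - r - a) (c + r), β ≤ f₁ x * f₂ y)
    (p : ℝ × ℝ) : 0 ≤ perturbedDensity f₁ f₂ φ a p := by
  have hdom : φ p + φ (p.1 + a, p.2 + a) ≤ f₁ p.1 * f₂ p.2 := by
    by_cases hp : φ p = 0
    · by_cases hpa : φ (p.1 + a, p.2 + a) = 0
      · rw [hp, hpa, add_zero]; exact mul_nonneg (hf₁ _) (hf₂ _)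
      · obtain ⟨⟨hx, hx'⟩, hy, hy'⟩ := hsupp hpa
        rw [hp, zero_add]
        exact (hφβ _).trans (hβ _ ⟨by linarith, by linarith⟩ _ ⟨by linarith, by linarith⟩)
    · obtain ⟨⟨hx, hx'⟩, hy, hy'⟩ := hsupp hp
      have hpa : φ (p.1 + a, p.2 + a) = 0 :=
        notMem_support.1 fun h ↦ by linarith [(hsupp h).1.2]
      rw [hpa, add_zero]
      exact (hφβ _).trans (hβ _ ⟨by linarith, hx'⟩ _ ⟨by linarith, hy'⟩)
  unfold perturbedDensity
  linarith [hφ0 (p.1, p.2 + a), hφ0 (p.1 + a, p.2)]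

lemma eq_zero_of_fst (ha : 0 ≤ a) {x : ℝ} (hx : x + a < c - r) (hfx : f₁ x = 0) (y : ℝ) :
    perturbedDensity f₁ f₂ φ a (x, y) = 0 := by
  have hφ : ∀ q : ℝ × ℝ, q.1 < c - r → φ q = 0 :=
    fun q hq ↦ notMem_support.1 fun h ↦ (hsupp h).1.1.not_gt hq
  simp only [perturbedDensity, hfx, zero_mul, hφ (x, _) (by dsimp only; linarith),
    hφ (x + a, _) hx]
  ring

lemma eq_zero_of_snd (ha : 0 ≤ a) {y : ℝ} (hy : y + a < c - r) (hfy : f₂ y = 0) (x : ℝ) :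
    perturbedDensity f₁ f₂ φ a (x, y) = 0 := by
  have hφ : ∀ q : ℝ × ℝ, q.2 < c - r → φ q = 0 :=
    fun q hq ↦ notMem_support.1 fun h ↦ (hsupp h).2.1.not_gt hq
  simp only [perturbedDensity, hfy, mul_zero, hφ (_, y) (by dsimp only; linarith),
    hφ (_, y + a) hy]
  ring

end Support

end perturbedDensity

theorem perturbed_joint_density_properties_general
    (f₁ f₂ : ℝ → ℝ)
    (h₁0 : ∀ x, 0 ≤ f₁ x) (h₂0 : ∀ x, 0 ≤ f₂ x)
    (h₁v : ∀ x ≤ (0:ℝ), f₁ x = 0) (h₂v : ∀ x ≤ (0:ℝ), f₂ x = 0)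
    (h₁i : ∫ x in Ioi (0:ℝ), f₁ x = 1) (h₂i : ∫ x in Ioi (0:ℝ), f₂ x = 1)
    (a v : ℝ) (ha : 0 < a) (hav : a < v)
    (r : ℝ) (hr : 0 < r) (hra : r < a / 4)
    (β : ℝ)
    (hβK : ∀ x ∈ Icc (v - a) (v + a), ∀ y ∈ Icc (v - a) (v + a), β < f₁ x * f₂ y)
    (φ : ℝ × ℝ → ℝ) (hφm : Measurable φ)
    (hφ0 : ∀ p, 0 ≤ φ p) (hφβ : ∀ p, φ p ≤ β)
    (hφsupp : ∀ p : ℝ × ℝ,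
      r ^ 2 < (p.1 - (v + a / 2)) ^ 2 + (p.2 - (v + a / 2)) ^ 2 → φ p = 0) :
    (∀ p : ℝ × ℝ, 0 ≤ f₁ p.1 * f₂ p.2 - φ p + φ (p.1, p.2 + a)
        - φ (p.1 + a, p.2 + a) + φ (p.1 + a, p.2)) ∧
    (∀ p : ℝ × ℝ, p.1 ≤ 0 ∨ p.2 ≤ 0 → f₁ p.1 * f₂ p.2 - φ p + φ (p.1, p.2 + a)
        - φ (p.1 + a, p.2 + a) + φ (p.1 + a, p.2) = 0) ∧
    (∫ p : ℝ × ℝ, (f₁ p.1 * f₂ p.2 - φ p + φ (p.1, p.2 + a)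
        - φ (p.1 + a, p.2 + a) + φ (p.1 + a, p.2)) = 1) ∧
    (∀ x ∈ Ioi (0:ℝ), ∫ y in Ioi (0:ℝ), (f₁ x * f₂ y - φ (x, y) + φ (x, y + a)
        - φ (x + a, y + a) + φ (x + a, y)) = f₁ x) ∧
    (∀ y ∈ Ioi (0:ℝ), ∫ x in Ioi (0:ℝ), (f₁ x * f₂ y - φ (x, y) + φ (x, y + a)
        - φ (x + a, y + a) + φ (x + a, y)) = f₂ y) := by
  set c := v + a / 2 with hc
  have hsupp : support φ ⊆ Icc (c - r) (c + r) ×ˢ Icc (c - r) (c + r) :=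
    support_subset_Icc_prod_Icc_of_sq_add_sq hr.le hφsupp
  have hφβ' : ∀ p, ‖φ p‖ ≤ β := fun p ↦ by rw [Real.norm_of_nonneg (hφ0 p)]; exact hφβ p
  have hI₁ : ∫ x, f₁ x = 1 := (integral_eq_setIntegral_Ioi_of_nonpos h₁v).trans h₁i
  have hI₂ : ∫ y, f₂ y = 1 := (integral_eq_setIntegral_Ioi_of_nonpos h₂v).trans h₂i
  have hf₁ : Integrable f₁ := .of_integral_ne_zero (hI₁ ▸ one_ne_zero)
  have hf₂ : Integrable f₂ := .of_integral_ne_zero (hI₂ ▸ one_ne_zero)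
  have hvanish : ∀ p : ℝ × ℝ, p.1 ≤ 0 ∨ p.2 ≤ 0 → perturbedDensity f₁ f₂ φ a p = 0 := by
    rintro ⟨x, y⟩ (hx | hy)
    · exact perturbedDensity.eq_zero_of_fst hsupp ha.le (by linarith) (h₁v x hx) y
    · exact perturbedDensity.eq_zero_of_snd hsupp ha.le (by linarith) (h₂v y hy) x
  have hK : Icc (c - r - a) (c + r) ⊆ Icc (v - a) (v + a) :=
    Icc_subset_Icc (by linarith) (by linarith)
  refine ⟨perturbedDensity.nonneg hsupp h₁0 h₂0 (by linarith) hφ0 hφβ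
      fun x hx y hy ↦ (hβK x (hK hx) y (hK hy)).le, hvanish, ?_, fun x _ ↦ ?_, fun y _ ↦ ?_⟩
  · show ∫ p, perturbedDensity f₁ f₂ φ a p = 1
    rw [perturbedDensity.integral_eq_integral_mul_integral hf₁ hf₂
      (integrable_of_support_subset_Icc_prod_Icc hsupp hφm hφβ'), hI₁, hI₂, mul_one]
  · show ∫ y in Ioi 0, perturbedDensity f₁ f₂ φ a (x, y) = f₁ x
    rw [← integral_eq_setIntegral_Ioi_of_nonpos fun y hy ↦ hvanish (x, y) (.inr hy),
      perturbedDensity.integral_prodMk_left x hf₂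
        (integrable_prodMk_left_of_support_subset_Icc_prod_Icc hsupp hφm hφβ' x)
        (integrable_prodMk_left_of_support_subset_Icc_prod_Icc hsupp hφm hφβ' (x + a)),
      hI₂, mul_one]
  · show ∫ x in Ioi 0, perturbedDensity f₁ f₂ φ a (x, y) = f₂ y
    rw [← integral_eq_setIntegral_Ioi_of_nonpos fun x hx ↦ hvanish (x, y) (.inl hx),
      perturbedDensity.integral_prodMk_right y hf₁
        (integrable_prodMk_right_of_support_subset_Icc_prod_Icc hsupp hφm hφβ' y)
        (integrable_prodMk_right_of_support_subset_Icc_prod_Icc hsupp hφm hφβ' (y + a)),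
      hI₁, one_mul]

/-- Given probability densities `f₁`, `f₂` strictly positive on `(0,∞)`, `0 < a < v`,
`K = [v−a, v+a]²`, `0 < r < a/4`, `0 < β < min_K f₁(x)f₂(y)`, and any measurable `φ` with
`0 ≤ φ ≤ β` supported in the closed disc of radius `r` centered at `(v+a/2, v+a/2)`, the
function `f(x,y) = f₁(x)f₂(y) − φ(x,y) + φ(x,y+a) − φ(x+a,y+a) + φ(x+a,y)` is nonnegative,
vanishes outside the first quadrant, has total integral 1, and has marginals `f₁`, `f₂`. -/
theorem perturbed_joint_density_properties
    (f₁ f₂ : ℝ → ℝ)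
    (h₁0 : ∀ x, 0 ≤ f₁ x) (h₂0 : ∀ x, 0 ≤ f₂ x)
    (h₁v : ∀ x ≤ (0:ℝ), f₁ x = 0) (h₂v : ∀ x ≤ (0:ℝ), f₂ x = 0)
    (h₁m : Measurable f₁) (h₂m : Measurable f₂)
    (h₁i : ∫ x in Ioi (0:ℝ), f₁ x = 1) (h₂i : ∫ x in Ioi (0:ℝ), f₂ x = 1)
    (hp₁ : ∀ x ∈ Ioi (0:ℝ), 0 < f₁ x) (hp₂ : ∀ x ∈ Ioi (0:ℝ), 0 < f₂ x)
    (a v : ℝ) (ha : 0 < a) (hav : a < v)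
    (r : ℝ) (hr : 0 < r) (hra : r < a / 4)
    (β : ℝ) (hβ : 0 < β)
    (hβK : ∀ x ∈ Icc (v - a) (v + a), ∀ y ∈ Icc (v - a) (v + a), β < f₁ x * f₂ y)
    (φ : ℝ × ℝ → ℝ) (hφm : Measurable φ)
    (hφ0 : ∀ p, 0 ≤ φ p) (hφβ : ∀ p, φ p ≤ β)
    (hφsupp : ∀ p : ℝ × ℝ,
      r ^ 2 < (p.1 - (v + a / 2)) ^ 2 + (p.2 - (v + a / 2)) ^ 2 → φ p = 0) :
    (∀ p : ℝ × ℝ, 0 ≤ f₁ p.1 * f₂ p.2 - φ p + φ (p.1, p.2 + a)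
        - φ (p.1 + a, p.2 + a) + φ (p.1 + a, p.2)) ∧
    (∀ p : ℝ × ℝ, p.1 ≤ 0 ∨ p.2 ≤ 0 → f₁ p.1 * f₂ p.2 - φ p + φ (p.1, p.2 + a)
        - φ (p.1 + a, p.2 + a) + φ (p.1 + a, p.2) = 0) ∧
    (∫ p : ℝ × ℝ, (f₁ p.1 * f₂ p.2 - φ p + φ (p.1, p.2 + a)
        - φ (p.1 + a, p.2 + a) + φ (p.1 + a, p.2)) = 1) ∧
    (∀ x ∈ Ioi (0:ℝ), ∫ y in Ioi (0:ℝ), (f₁ x * f₂ y - φ (x, y) + φ (x, y + a)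
        - φ (x + a, y + a) + φ (x + a, y)) = f₁ x) ∧
    (∀ y ∈ Ioi (0:ℝ), ∫ x in Ioi (0:ℝ), (f₁ x * f₂ y - φ (x, y) + φ (x, y + a)
        - φ (x + a, y + a) + φ (x + a, y)) = f₂ y) :=
  perturbed_joint_density_properties_general f₁ f₂ h₁0 h₂0 h₁v h₂v h₁i h₂i a v ha hav r hr hra β hβK
    φ hφm hφ0 hφβ hφsupp
end
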